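/- Let D₀ = {d¹, …, dᵐ} ⊆ ℝ² be a finite set of m directions that positively spans ℝ², i.e., { Σᵢ λᵢ dⁱ : λᵢ ≥ 0 for all i } = ℝ². Let X ⊆ ℝ² be a polytope with exactly n_v vertices (extreme points). Then there exists a finite set D ⊆ ℝ² with D₀ ⊆ D and |D| ≤ (3·n_v + 1) + (m - 3) such that D determines X within the class of all polytopes in ℝ². (Lemma on replacing the initialization set of Algorithm 1: when the known vertex bound exceeds n_v, at most (3n_v + 1) + (m - 3) oracle calls suffice.) -/

import Mathlib

open RealInnerProductSpace

/-- Support function of a subset of `ℝⁿ`. -/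
noncomputable def supp {n : ℕ} (X : Set (EuclideanSpace ℝ (Fin n)))
    (d : EuclideanSpace ℝ (Fin n)) : ℝ :=
  sSup ((fun v => ⟪v, d⟫) '' X)

/-- `X` is a polytope: the convex hull of a nonempty finite set. -/
def IsPolytope {n : ℕ} (X : Set (EuclideanSpace ℝ (Fin n))) : Prop :=
  ∃ F : Finset (EuclideanSpace ℝ (Fin n)), F.Nonempty ∧ X = convexHull ℝ (F : Set _)

/-- The finite direction set `D` determines `X` within the class `𝒞`. -/
def Determines {n : ℕ} (𝒞 : Set (Set (EuclideanSpace ℝ (Fin n))))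
    (D : Finset (EuclideanSpace ℝ (Fin n))) (X : Set (EuclideanSpace ℝ (Fin n))) : Prop :=
  ∀ Y ∈ 𝒞, (∀ d ∈ D, supp Y d = supp X d) → Y = X

/-!
Write `X = conv V` with `V` its vertex set. A polytope `Y` with the same support values as `X` in
every direction of `D` equals `X` as soon as
(i) every vertex `v` is the unique maximiser over `V` of some direction in `D`, and
(ii) every direction lies in the cone spanned by those directions of `D` at which one common
point of `X` is a maximiser.
Indeed, (ii) and a separating hyperplane give `Y ⊆ X`, and then (i) forces every vertex into `Y`.

For a point, (ii) is the positive spanning of `D₀`. For a polygon (or segment) in the plane, the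
normal cone at a vertex `v` is spanned by the outer normals of the two boundary edges at `v`
together with a direction exposing `v`. Every edge leaves exactly one vertex in counterclockwise
order, so `n_v` edge normals and `n_v` exposing directions suffice: `m + 2 n_v` directions in all.
-/

section General

variable {E : Type*} [NormedAddCommGroup E] [InnerProductSpace ℝ E]

lemma inner_le_of_mem_convexHull {s : Set E} {d x : E} {M : ℝ} (h : ∀ w ∈ s, ⟪w, d⟫ ≤ M)
    (hx : x ∈ convexHull ℝ s) : ⟪x, d⟫ ≤ M :=
  convexHull_min h (convex_halfSpace_le ((innerₗ E).flip d).isLinear M) hx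

lemma eq_of_mem_convexHull_of_inner_le {s : Set E} {v e y : E} (hv : v ∈ s)
    (he : ∀ w ∈ s, w ≠ v → ⟪w, e⟫ < ⟪v, e⟫) (hy : y ∈ convexHull ℝ s)
    (hye : ⟪v, e⟫ ≤ ⟪y, e⟫) : y = v := by
  rw [← Set.insert_eq_of_mem hv, ← Set.insert_sdiff_singleton] at hy
  rcases (s \ {v}).eq_empty_or_nonempty with hs | hs
  · simpa [hs] using hy
  rw [convexHull_insert hs, convexJoin_singleton_left, Set.mem_iUnion₂] at hy
  obtain ⟨w, hw, a, b, ha, hb, hab, rfl⟩ := hy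
  have hwe : ⟪w, e⟫ < ⟪v, e⟫ :=
    convexHull_min (fun x hx => he x hx.1 hx.2)
      (convex_halfSpace_lt ((innerₗ E).flip e).isLinear _) hw
  obtain rfl : a = 1 - b := eq_sub_of_add_eq hab
  obtain rfl : b = 0 := by
    rw [inner_add_left, real_inner_smul_left, real_inner_smul_left] at hye
    nlinarith
  simp

lemma not_collinear_of_mem_extremePoints {s : Set E} {a b c : E} (ha : a ∈ s.extremePoints ℝ)
    (hb : b ∈ s.extremePoints ℝ) (hc : c ∈ s.extremePoints ℝ) (hab : a ≠ b) (hac : a ≠ c)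
    (hbc : b ≠ c) : ¬Collinear ℝ {a, b, c} := fun h => by
  rcases h.wbtw_or_wbtw_or_wbtw with h | h | h
  · exact ((mem_extremePoints_iff_forall_segment.1 hb).2 a ha.1 c hc.1
      (mem_segment_iff_wbtw.2 h)).elim hab hbc.symm
  · exact ((mem_extremePoints_iff_forall_segment.1 hc).2 b hb.1 a ha.1
      (mem_segment_iff_wbtw.2 h)).elim hbc hac
  · exact ((mem_extremePoints_iff_forall_segment.1 ha).2 c hc.1 b hb.1
      (mem_segment_iff_wbtw.2 h)).elim hac.symm hab.symm

variable [CompleteSpace E]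

lemma exists_forall_inner_lt_of_mem_extremePoints {V : Finset E} {v : E}
    (hv : v ∈ (convexHull ℝ (V : Set E)).extremePoints ℝ) :
    ∃ e : E, ∀ w ∈ V, w ≠ v → ⟪w, e⟫ < ⟪v, e⟫ := by
  have hnot : v ∉ convexHull ℝ ((V : Set E) \ {v}) := fun h =>
    ((convex_convexHull ℝ _).mem_extremePoints_iff_mem_sdiff_convexHull_sdiff.1 hv).2
      (convexHull_mono (Set.sdiff_subset_sdiff_left (subset_convexHull ℝ _)) h)
  obtain ⟨f, u, hf, hfv⟩ := geometric_hahn_banach_closed_point (convex_convexHull ℝ _)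
    ((V.finite_toSet.sdiff).isClosed_convexHull ℝ) hnot
  refine ⟨(InnerProductSpace.toDual ℝ E).symm f, fun w hw hwv => ?_⟩
  simp only [real_inner_comm _ w, real_inner_comm _ v, InnerProductSpace.toDual_symm_apply]
  exact (hf w (subset_convexHull ℝ _ ⟨hw, hwv⟩)).trans hfv

end General

section Support

variable {n : ℕ}

lemma IsPolytope.isCompact {X : Set (EuclideanSpace ℝ (Fin n))} (hX : IsPolytope X) :
    IsCompact X := by
  obtain ⟨F, -, rfl⟩ := hX
  exact F.finite_toSet.isCompact_convexHull ℝ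

lemma IsPolytope.nonempty {X : Set (EuclideanSpace ℝ (Fin n))} (hX : IsPolytope X) :
    X.Nonempty := by
  obtain ⟨F, hF, rfl⟩ := hX
  exact (Finset.coe_nonempty.2 hF).convexHull

lemma IsPolytope.exists_inner_eq_supp {X : Set (EuclideanSpace ℝ (Fin n))} (hX : IsPolytope X)
    (d : EuclideanSpace ℝ (Fin n)) : ∃ x ∈ X, ⟪x, d⟫ = supp X d :=
  (hX.isCompact.image (continuous_id.inner continuous_const)).sSup_mem (hX.nonempty.image _)

lemma IsPolytope.inner_le_supp {X : Set (EuclideanSpace ℝ (Fin n))} (hX : IsPolytope X)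
    {x : EuclideanSpace ℝ (Fin n)} (hx : x ∈ X) (d : EuclideanSpace ℝ (Fin n)) :
    ⟪x, d⟫ ≤ supp X d :=
  le_csSup (hX.isCompact.image (continuous_id.inner continuous_const)).bddAbove ⟨x, hx, rfl⟩

lemma IsPolytope.exists_finset_eq_extremePoints {X : Set (EuclideanSpace ℝ (Fin n))}
    (hX : IsPolytope X) :
    ∃ V : Finset (EuclideanSpace ℝ (Fin n)),
      (V : Set _) = X.extremePoints ℝ ∧ X = convexHull ℝ (V : Set _) := by
  have hfin : (X.extremePoints ℝ).Finite := by
    obtain ⟨F, -, rfl⟩ := hX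
    exact F.finite_toSet.subset extremePoints_convexHull_subset
  refine ⟨hfin.toFinset, hfin.coe_toFinset, ?_⟩
  obtain ⟨F, -, rfl⟩ := hX
  rw [hfin.coe_toFinset, ← (hfin.isClosed_convexHull ℝ).closure_eq,
    closure_convexHull_extremePoints (F.finite_toSet.isCompact_convexHull ℝ)
      (convex_convexHull ℝ _)]

lemma supp_convexHull_eq {s : Set (EuclideanSpace ℝ (Fin n))} {v d : EuclideanSpace ℝ (Fin n)}
    (hv : v ∈ s) (h : ∀ w ∈ s, ⟪w, d⟫ ≤ ⟪v, d⟫) : supp (convexHull ℝ s) d = ⟪v, d⟫ :=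
  IsGreatest.csSup_eq ⟨⟨v, subset_convexHull ℝ s hv, rfl⟩,
    by rintro _ ⟨x, hx, rfl⟩; exact inner_le_of_mem_convexHull h hx⟩

def normalCone (X : Set (EuclideanSpace ℝ (Fin n))) (x : EuclideanSpace ℝ (Fin n)) :
    Set (EuclideanSpace ℝ (Fin n)) :=
  {d | supp X d ≤ ⟪x, d⟫}

def GeneratesNormalCones (D X : Set (EuclideanSpace ℝ (Fin n))) : Prop :=
  ∀ z, ∃ x ∈ X, z ∈ PointedCone.hull ℝ (D ∩ normalCone X x)

lemma mem_normalCone_convexHull {s : Set (EuclideanSpace ℝ (Fin n))}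
    {v d : EuclideanSpace ℝ (Fin n)} (hv : v ∈ s) (h : ∀ w ∈ s, ⟪w - v, d⟫ ≤ 0) :
    d ∈ normalCone (convexHull ℝ s) v :=
  (supp_convexHull_eq hv fun w hw => by linarith [inner_sub_left (𝕜 := ℝ) w v d ▸ h w hw]).le

lemma GeneratesNormalCones.mono {D D' X : Set (EuclideanSpace ℝ (Fin n))}
    (h : GeneratesNormalCones D X) (hD : D ⊆ D') : GeneratesNormalCones D' X := fun z =>
  (h z).imp fun _ => And.imp_right (Submodule.span_mono (Set.inter_subset_inter_left _ hD) ·)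

lemma generatesNormalCones_singleton {D : Set (EuclideanSpace ℝ (Fin n))}
    (v : EuclideanSpace ℝ (Fin n)) (hD : ∀ z, z ∈ PointedCone.hull ℝ D) :
    GeneratesNormalCones D {v} := fun z =>
  ⟨v, rfl, by simpa [normalCone, supp] using hD z⟩

lemma GeneratesNormalCones.subset {D X Y : Set (EuclideanSpace ℝ (Fin n))}
    (hgen : GeneratesNormalCones D X) (hXc : Convex ℝ X) (hXcl : IsClosed X)
    (hY : ∀ d ∈ D, ∀ y ∈ Y, ⟪y, d⟫ ≤ supp X d) : Y ⊆ X := by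
  intro y hy
  by_contra hyX
  obtain ⟨f, u, hfX, hfy⟩ := geometric_hahn_banach_closed_point hXc hXcl hyX
  set z := (InnerProductSpace.toDual ℝ _).symm f
  obtain ⟨x, hx, hz⟩ := hgen z
  have hle : PointedCone.hull ℝ (D ∩ normalCone X x) ≤
      (ProperCone.innerDual {x - y} : PointedCone ℝ _) :=
    Submodule.span_le.2 fun d ⟨hdD, hdx⟩ => by
      simpa [inner_sub_left] using (hY d hdD y hy).trans hdx
  have hxy : 0 ≤ ⟪x - y, z⟫ := by simpa using hle hz
  rw [inner_sub_left, real_inner_comm, real_inner_comm z, InnerProductSpace.toDual_symm_apply,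
    InnerProductSpace.toDual_symm_apply] at hxy
  linarith [hfX x hx]

theorem determines_of_generatesNormalCones {V D : Finset (EuclideanSpace ℝ (Fin n))}
    (hexp : ∀ v ∈ V, ∃ e ∈ D, ∀ w ∈ V, w ≠ v → ⟪w, e⟫ < ⟪v, e⟫)
    (hgen : GeneratesNormalCones (n := n) D (convexHull ℝ V)) :
    Determines {Y | IsPolytope Y} D (convexHull ℝ ↑V) := by
  rintro Y hY hYD
  have hYX : Y ⊆ convexHull ℝ V := hgen.subset (convex_convexHull ℝ _)
    (V.finite_toSet.isClosed_convexHull ℝ) fun d hd y hy => hYD d hd ▸ hY.inner_le_supp hy d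
  refine hYX.antisymm (convexHull_min (fun v hv => ?_) ?_)
  · obtain ⟨e, heD, he⟩ := hexp v hv
    obtain ⟨y, hy, hye⟩ := hY.exists_inner_eq_supp e
    rw [hYD e heD, supp_convexHull_eq hv fun w hw => ?_] at hye
    · rwa [← eq_of_mem_convexHull_of_inner_le hv he (hYX hy) hye.ge]
    · obtain rfl | hwv := eq_or_ne w v
      exacts [le_rfl, (he w hw hwv).le]
  · obtain ⟨F, -, rfl⟩ := hY
    exact convex_convexHull ℝ _

end Support

section Plane

local notation "ℝ²" => EuclideanSpace ℝ (Fin 2)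

def perp (v : ℝ²) : ℝ² := !₂[-v 1, v 0]

def cross (a b : ℝ²) : ℝ := a 0 * b 1 - a 1 * b 0

@[simp] lemma perp_apply_zero (v : ℝ²) : perp v 0 = -v 1 := rfl

@[simp] lemma perp_apply_one (v : ℝ²) : perp v 1 = v 0 := rfl

lemma inner_fin_two (x y : ℝ²) : ⟪x, y⟫ = x 0 * y 0 + x 1 * y 1 := by
  simp [PiLp.inner_apply, Fin.sum_univ_two, mul_comm]

lemma inner_perp (s t : ℝ²) : ⟪t, perp s⟫ = cross s t := by
  simp only [inner_fin_two, perp_apply_zero, perp_apply_one, cross]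
  ring

lemma perp_neg (v : ℝ²) : perp (-v) = -perp v := by
  ext i; fin_cases i <;> simp [perp]

lemma perp_smul (c : ℝ) (v : ℝ²) : perp (c • v) = c • perp v := by
  ext i; fin_cases i <;> simp [perp]

lemma cross_swap (a b : ℝ²) : cross b a = -cross a b := by
  simp only [cross]; ring

lemma cross_mul_inner_self (p q e : ℝ²) :
    cross p q * ⟪e, e⟫ = ⟪p, e⟫ * ⟪q, perp e⟫ - ⟪p, perp e⟫ * ⟪q, e⟫ := by
  simp only [inner_fin_two, perp_apply_zero, perp_apply_one, cross]
  ring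

lemma exists_eq_smul_of_cross_eq_zero {s t : ℝ²} (hs : s ≠ 0) (h : cross s t = 0) :
    ∃ μ : ℝ, t = μ • s := by
  simp only [cross] at h
  have hs' : s 0 ≠ 0 ∨ s 1 ≠ 0 := by
    by_contra! h0
    exact hs (by ext i; fin_cases i <;> simp [h0.1, h0.2])
  rcases hs' with h0 | h1
  · refine ⟨t 0 / s 0, ?_⟩
    ext i; fin_cases i <;> simp <;> field_simp; linarith
  · refine ⟨t 1 / s 1, ?_⟩
    ext i; fin_cases i <;> simp <;> field_simp; linarith

lemma cross_nonneg_iff {p q e : ℝ²} (hp : ⟪p, e⟫ < 0) (hq : ⟪q, e⟫ < 0) :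
    0 ≤ cross p q ↔ ⟪p, perp e⟫ / ⟪p, e⟫ ≤ ⟪q, perp e⟫ / ⟪q, e⟫ := by
  have he : 0 < ⟪e, e⟫ := real_inner_self_pos.2 fun h => by simp [h] at hp
  have key : cross p q * ⟪e, e⟫ =
      ⟪p, e⟫ * ⟪q, e⟫ * (⟪q, perp e⟫ / ⟪q, e⟫ - ⟪p, perp e⟫ / ⟪p, e⟫) := by
    rw [cross_mul_inner_self]
    field_simp [hp.ne, hq.ne]
  rw [← mul_nonneg_iff_of_pos_right he, key,
    mul_nonneg_iff_of_pos_left (mul_pos_of_neg_of_neg hp hq), sub_nonneg]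

lemma exists_forall_cross_nonneg {P : Finset ℝ²} (hP : P.Nonempty) {e : ℝ²}
    (he : ∀ p ∈ P, ⟪p, e⟫ < 0) : ∃ p ∈ P, ∀ q ∈ P, 0 ≤ cross p q := by
  obtain ⟨p, hp, hmin⟩ := P.exists_min_image (fun p => ⟪p, perp e⟫ / ⟪p, e⟫) hP
  exact ⟨p, hp, fun q hq => (cross_nonneg_iff (he p hp) (he q hq)).2 (hmin q hq)⟩

lemma exists_forall_cross_nonpos {P : Finset ℝ²} (hP : P.Nonempty) {e : ℝ²}
    (he : ∀ p ∈ P, ⟪p, e⟫ < 0) : ∃ p ∈ P, ∀ q ∈ P, cross p q ≤ 0 := by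
  obtain ⟨p, hp, hmax⟩ := P.exists_max_image (fun p => ⟪p, perp e⟫ / ⟪p, e⟫) hP
  refine ⟨p, hp, fun q hq => ?_⟩
  rw [← neg_nonneg, ← cross_swap]
  exact (cross_nonneg_iff (he q hq) (he p hp)).2 (hmax q hq)

lemma mem_hull_of_cross_nonneg {t₁ t₂ e z : ℝ²} (ht : 0 ≤ cross t₁ t₂)
    (he₁ : ⟪t₁, e⟫ < 0) (he₂ : ⟪t₂, e⟫ < 0) (hz₁ : ⟪t₁, z⟫ ≤ 0) (hz₂ : ⟪t₂, z⟫ ≤ 0) :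
    z ∈ PointedCone.hull ℝ {-perp t₁, perp t₂, e} := by
  have mem : ∀ {a : ℝ} {d : ℝ²}, 0 ≤ a → d ∈ ({-perp t₁, perp t₂, e} : Set ℝ²) →
      a • d ∈ PointedCone.hull ℝ {-perp t₁, perp t₂, e} := fun ha hd =>
    PointedCone.smul_mem _ ha (PointedCone.subset_hull hd)
  rcases ht.lt_or_eq with ht | ht
  · have hz : cross t₁ t₂ • z = ⟪t₂, z⟫ • perp t₁ - ⟪t₁, z⟫ • perp t₂ := by
      ext i; fin_cases i <;> simp [inner_fin_two, cross] <;> ring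
    rw [← inv_smul_smul₀ ht.ne' z, hz,
      show ∀ a b : ℝ, (cross t₁ t₂)⁻¹ • (a • perp t₁ - b • perp t₂) =
        (-a / cross t₁ t₂) • -perp t₁ + (-b / cross t₁ t₂) • perp t₂ from fun a b => by module]
    exact add_mem (mem (div_nonneg (by linarith) ht.le) (by simp))
      (mem (div_nonneg (by linarith) ht.le) (by simp))
  · -- `t₁` and `t₂` point the same way: the cone is a half-plane, and `e` is needed to span it.
    have ht₁ : t₁ ≠ 0 := by rintro rfl; simp at he₁
    obtain ⟨μ, rfl⟩ := exists_eq_smul_of_cross_eq_zero ht₁ ht.symm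
    have hμ : 0 < μ := by
      rw [real_inner_smul_left] at he₂
      nlinarith
    have hz : ⟪t₁, e⟫ • z = ⟪t₁, z⟫ • e + cross e z • perp t₁ := by
      ext i; fin_cases i <;> simp [inner_fin_two, cross] <;> ring
    rw [← inv_smul_smul₀ he₁.ne z, hz, smul_add, smul_smul, smul_smul]
    refine add_mem (mem (mul_nonneg_of_nonpos_of_nonpos (inv_nonpos.2 he₁.le) hz₁) (by simp)) ?_
    rcases le_total 0 ((⟪t₁, e⟫)⁻¹ * cross e z) with hγ | hγ
    · rw [← div_mul_cancel₀ (_ * _) hμ.ne', ← smul_smul, ← perp_smul]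
      exact mem (div_nonneg hγ hμ.le) (by simp)
    · convert mem (neg_nonneg.2 hγ) (d := -perp t₁) (by simp) using 1
      rw [smul_neg, neg_smul, neg_neg]

lemma collinear_of_cross_sub_eq_zero {a b c : ℝ²} (h : cross (b - a) (c - a) = 0) :
    Collinear ℝ {a, b, c} := by
  obtain rfl | hab := eq_or_ne b a
  · simp [collinear_pair]
  obtain ⟨μ, hμ⟩ := exists_eq_smul_of_cross_eq_zero (sub_ne_zero.2 hab) h
  refine (collinear_iff_of_mem (Set.mem_insert a _)).2 ⟨b - a, ?_⟩
  simp only [Set.mem_insert_iff, Set.mem_singleton_iff, forall_eq_or_imp, forall_eq, vadd_eq_add]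
  exact ⟨⟨0, by simp⟩, ⟨1, by simp⟩, ⟨μ, by rw [← hμ, sub_add_cancel]⟩⟩

lemma eq_of_cross_sub_nonneg {s : Set ℝ²} {v w w' : ℝ²} (hv : v ∈ s.extremePoints ℝ)
    (hw : w ∈ s.extremePoints ℝ) (hw' : w' ∈ s.extremePoints ℝ) (hwv : w ≠ v) (hw'v : w' ≠ v)
    (h : 0 ≤ cross (w - v) (w' - v)) (h' : 0 ≤ cross (w' - v) (w - v)) : w = w' := by
  by_contra hne
  rw [cross_swap] at h'
  exact not_collinear_of_mem_extremePoints hv hw hw' hwv.symm hw'v.symm hne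
    (collinear_of_cross_sub_eq_zero (by linarith))

lemma exists_supporting_edges {V : Finset ℝ²} {v : ℝ²}
    (hv : v ∈ (convexHull ℝ (V : Set ℝ²)).extremePoints ℝ) (hvV : v ∈ V) (hV : 2 ≤ V.card) :
    (∃ w ∈ V, w ≠ v ∧ ∀ x ∈ V, 0 ≤ cross (w - v) (x - v)) ∧
      ∃ w ∈ V, w ≠ v ∧ ∀ x ∈ V, cross (w - v) (x - v) ≤ 0 := by
  classical
  obtain ⟨e, he⟩ := exists_forall_inner_lt_of_mem_extremePoints hv
  set P := (V.erase v).image (· - v)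
  have hP : P.Nonempty :=
    (Finset.card_pos.1 (by rw [Finset.card_erase_of_mem hvV]; omega)).image _
  have hPe : ∀ p ∈ P, ⟪p, e⟫ < 0 := by
    simp only [P, Finset.mem_image, Finset.mem_erase]
    rintro _ ⟨w, ⟨hwv, hw⟩, rfl⟩
    linarith [inner_sub_left (𝕜 := ℝ) w v e, he w hw hwv]
  have hVP : ∀ x ∈ V, x = v ∨ x - v ∈ P := fun x hx =>
    (eq_or_ne x v).imp_right fun hxv => Finset.mem_image_of_mem _ (Finset.mem_erase.2 ⟨hxv, hx⟩)
  obtain ⟨_, hp, hl⟩ := exists_forall_cross_nonneg hP hPe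
  obtain ⟨_, hq, hr⟩ := exists_forall_cross_nonpos hP hPe
  obtain ⟨w₁, hw₁, rfl⟩ := Finset.mem_image.1 hp
  obtain ⟨w₂, hw₂, rfl⟩ := Finset.mem_image.1 hq
  refine ⟨⟨w₁, Finset.mem_of_mem_erase hw₁, Finset.ne_of_mem_erase hw₁, fun x hx => ?_⟩,
    ⟨w₂, Finset.mem_of_mem_erase hw₂, Finset.ne_of_mem_erase hw₂, fun x hx => ?_⟩⟩
  · rcases hVP x hx with rfl | hx
    exacts [by simp [cross], hl _ hx]
  · rcases hVP x hx with rfl | hx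
    exacts [by simp [cross], hr _ hx]

theorem exists_generatesNormalCones_of_two_le_card {V : Finset ℝ²}
    (hV : (V : Set ℝ²) = (convexHull ℝ (V : Set ℝ²)).extremePoints ℝ) (hcard : 2 ≤ V.card) :
    ∃ N : Finset ℝ², N.card ≤ 2 * V.card ∧
      (∀ v ∈ V, ∃ e ∈ N, ∀ w ∈ V, w ≠ v → ⟪w, e⟫ < ⟪v, e⟫) ∧
      GeneratesNormalCones (N : Set ℝ²) (convexHull ℝ V) := by
  classical
  have hext : ∀ v ∈ V, v ∈ (convexHull ℝ (V : Set ℝ²)).extremePoints ℝ := fun v hv =>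
    hV ▸ Finset.mem_coe.2 hv
  choose! ex hex using fun v hv => exists_forall_inner_lt_of_mem_extremePoints (hext v hv)
  choose! s hsV hsv hs using fun v hv => (exists_supporting_edges (hext v hv) hv hcard).1
  choose! p hpV hpv hp using fun v hv => (exists_supporting_edges (hext v hv) hv hcard).2
  -- `s v` and `p v` are the neighbours of `v` after and before it in counterclockwise order.
  have hsp : ∀ v ∈ V, s (p v) = v := fun v hv =>
    eq_of_cross_sub_nonneg (hext _ (hpV v hv)) (hext _ (hsV _ (hpV v hv))) (hext v hv)
      (hsv _ (hpV v hv)) (hpv v hv).symm (hs _ (hpV v hv) v hv) (by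
        have := hp v hv (s (p v)) (hsV _ (hpV v hv))
        simp only [cross, PiLp.sub_apply] at this ⊢
        linarith)
  refine ⟨V.image ex ∪ V.image fun v => -perp (s v - v), ?_,
    fun v hv => ⟨ex v, by simp [Finset.mem_image_of_mem ex hv], hex v hv⟩, fun z => ?_⟩
  · grw [Finset.card_union_le, Finset.card_image_le, Finset.card_image_le]
    omega
  obtain ⟨v, hv, hmax⟩ := V.exists_max_image (⟪·, z⟫) (Finset.card_pos.1 (by omega))
  have hedge : ∀ w ∈ V, w ≠ v → ⟪w - v, ex v⟫ < 0 ∧ ⟪w - v, z⟫ ≤ 0 := fun w hw hwv => by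
    rw [inner_sub_left, inner_sub_left]
    exact ⟨by linarith [hex v hv w hw hwv], by linarith [hmax w hw]⟩
  refine ⟨v, subset_convexHull ℝ _ hv, Submodule.span_mono ?_ (mem_hull_of_cross_nonneg
    (hs v hv _ (hpV v hv)) (hedge _ (hsV v hv) (hsv v hv)).1 (hedge _ (hpV v hv) (hpv v hv)).1
    (hedge _ (hsV v hv) (hsv v hv)).2 (hedge _ (hpV v hv) (hpv v hv)).2)⟩
  simp only [Set.insert_subset_iff, Set.singleton_subset_iff, Finset.coe_union]
  refine ⟨⟨Or.inr (Finset.mem_image_of_mem _ hv), mem_normalCone_convexHull hv fun x hx => ?_⟩,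
    ⟨Or.inr (Finset.mem_image.2 ⟨p v, hpV v hv, ?_⟩), mem_normalCone_convexHull hv fun x hx => ?_⟩,
    ⟨Or.inl (Finset.mem_image_of_mem _ hv), mem_normalCone_convexHull hv fun x hx => ?_⟩⟩
  · rw [inner_neg_right, inner_perp, neg_nonpos]
    exact hs v hv x hx
  · rw [hsp v hv, ← perp_neg, neg_sub]
  · rw [inner_perp]
    exact hp v hv x hx
  · obtain rfl | hxv := eq_or_ne x v
    exacts [by simp, (hedge x hx hxv).1.le]

end Plane

/-- if `D₀` is a set of `m` directions positively spanning `ℝ²`, then a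
polytope `X ⊆ ℝ²` with exactly `n_v` vertices is determined by a set of directions
containing `D₀` of cardinality at most `(3 n_v + 1) + (m - 3)`, within the class of
all polytopes in `ℝ²`. -/
theorem stmt_7 (m : ℕ) (D₀ : Finset (EuclideanSpace ℝ (Fin 2))) (hm : D₀.card = m)
    (hspan : ∀ x : EuclideanSpace ℝ (Fin 2), ∃ c : EuclideanSpace ℝ (Fin 2) → ℝ,
      (∀ d, 0 ≤ c d) ∧ x = ∑ d ∈ D₀, c d • d)
    (n_v : ℕ) (X : Set (EuclideanSpace ℝ (Fin 2))) (hX : IsPolytope X)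
    (hcard : (Set.extremePoints ℝ X).ncard = n_v) :
    ∃ D : Finset (EuclideanSpace ℝ (Fin 2)), D₀ ⊆ D ∧ D.card ≤ (3 * n_v + 1) + (m - 3) ∧
      Determines {Y | IsPolytope Y} D X := by
  classical
  have hXne := hX.nonempty
  obtain ⟨V, hVX, rfl⟩ := hX.exists_finset_eq_extremePoints
  have hV : V.card = n_v := by rw [← hcard, ← hVX, Set.ncard_coe_finset]
  obtain ⟨N, hN, hexp, hgen⟩ : ∃ N : Finset (EuclideanSpace ℝ (Fin 2)),
      m + N.card ≤ (3 * n_v + 1) + (m - 3) ∧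
      (∀ v ∈ V, ∃ e ∈ N, ∀ w ∈ V, w ≠ v → ⟪w, e⟫ < ⟪v, e⟫) ∧
      GeneratesNormalCones (n := 2) ↑(D₀ ∪ N) (convexHull ℝ V) := by
    obtain h1 | h2 : n_v = 1 ∨ 2 ≤ n_v := by
      have := hV ▸ Finset.card_pos.2 (by simpa using hXne)
      omega
    · obtain ⟨v, rfl⟩ := Finset.card_eq_one.1 (hV.trans h1)
      rw [Finset.coe_singleton, convexHull_singleton]
      -- a single vertex is exposed by any direction, `0` included
      refine ⟨{0}, by rw [Finset.card_singleton]; omega, by simp, ?_⟩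
      refine (generatesNormalCones_singleton v fun z => ?_).mono Finset.subset_union_left
      obtain ⟨c, hc, rfl⟩ := hspan z
      exact Submodule.sum_mem _ fun d hd =>
        PointedCone.smul_mem _ (hc d) (PointedCone.subset_hull hd)
    · obtain ⟨N, hN, hexp, hgen⟩ := exists_generatesNormalCones_of_two_le_card hVX (hV ▸ h2)
      exact ⟨N, by omega, hexp, hgen.mono Finset.subset_union_right⟩
  refine ⟨D₀ ∪ N, Finset.subset_union_left, (Finset.card_union_le _ _).trans (by omega),
    determines_of_generatesNormalCones (fun v hv => ?_) hgen⟩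
  obtain ⟨e, he, hev⟩ := hexp v hv
  exact ⟨e, Finset.mem_union_right _ he, hev⟩
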